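/- arXiv:2505.08496 — 2 statements merged into one kernel-verified Lean document; each statement's English description precedes it below -/
import Mathlib

section
/- Let S be a semiring carrying a complete lattice order ≤ such that addition is continuous in each argument over nonempty sets: for every nonempty K ⊆ S and a ∈ S, a ⊕ sSup K = ⨆_{k∈K} (a ⊕ k) and (sSup K) ⊕ a = ⨆_{k∈K} (k ⊕ a). Then infinite sums are continuous in each argument: for every sequence s : ℕ → S, every index j ∈ ℕ, and every nonempty K ⊆ S, ⨆_{k∈K} ( ⨆_{n∈ℕ} ∑_{i<n} (s updated at position j to value k) i ) = ⨆_{n∈ℕ} ∑_{i<n} (s updated at position j to value sSup K) i. -/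
/-- If addition of a complete lattice semiring is continuous in each argument over nonempty
sets, then infinite sums are continuous in each argument. -/
theorem infinite_sum_continuous {S : Type*} [Semiring S] [CompleteLattice S]
    (hadd_left : ∀ K : Set S, K.Nonempty → ∀ a : S, a + sSup K = ⨆ k ∈ K, (a + k))
    (hadd_right : ∀ K : Set S, K.Nonempty → ∀ a : S, sSup K + a = ⨆ k ∈ K, (k + a))
    (s : ℕ → S) (j : ℕ) (K : Set S) (hK : K.Nonempty) :
    (⨆ k ∈ K, ⨆ n : ℕ, ∑ i ∈ Finset.range n, Function.update s j k i)
      = ⨆ n : ℕ, ∑ i ∈ Finset.range n, Function.update s j (sSup K) i := by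
  have key : ∀ n : ℕ, (∑ i ∈ Finset.range n, Function.update s j (sSup K) i)
      = ⨆ k ∈ K, ∑ i ∈ Finset.range n, Function.update s j k i := by
    intro n
    by_cases hj : j ∈ Finset.range n
    · simp only [Finset.sum_update_of_mem hj]
      exact hadd_right K hK _
    · simp only [Finset.sum_update_of_notMem hj]
      exact (biSup_const hK).symm
  refine le_antisymm ?_ ?_
  · refine iSup₂_le fun k hk => iSup_le fun n => le_iSup_of_le n ?_
    rw [key n]
    exact le_biSup (fun k => ∑ i ∈ Finset.range n, Function.update s j k i) hk
  · refine iSup_le fun n => ?_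
    rw [key n]
    exact iSup₂_le fun k hk => le_iSup₂_of_le k hk (le_iSup (fun n => ∑ i ∈ Finset.range n, Function.update s j k i) n)
end

section
/- Let S be a semiring carrying a complete lattice order ≤ such that multiplication is continuous in each argument over nonempty sets: for every nonempty K ⊆ S and a ∈ S, a ⊙ sSup K = ⨆_{k∈K} (a ⊙ k) and (sSup K) ⊙ a = ⨆_{k∈K} (k ⊙ a). Then infinite products are continuous in each argument: for every sequence s : ℕ → S, every index j ∈ ℕ, and every nonempty K ⊆ S, ⨆_{k∈K} ( ⨆_{n∈ℕ} ∏_{i<n} (s updated at position j to value k) i ) = ⨆_{n∈ℕ} ∏_{i<n} (s updated at position j to value sSup K) i. -/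
lemma prefix_prod_update {S : Type*} [Semiring S] (s : ℕ → S) (j n : ℕ) (k : S)
    (h : j < n) :
    ((List.range n).map (Function.update s j k)).prod
      = ((List.range j).map s).prod * k * ((List.range' (j+1) (n-j-1)).map s).prod := by
  have hsplit : List.range n = List.range j ++ List.range' j (n - j) := by
    rw [List.range_eq_range', List.range_eq_range']
    have hn : n = j + (n - j) := by omega
    rw [hn, ← List.range'_append]
    simp
  have hnj : n - j = (n - j - 1) + 1 := by omega
  have h1 : (List.range j).map (Function.update s j k) = (List.range j).map s := by
    apply List.map_congr_left
    intro i hi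
    rw [List.mem_range] at hi
    exact Function.update_of_ne hi.ne k s
  have h2 : (List.range' (j+1) (n-j-1)).map (Function.update s j k)
      = (List.range' (j+1) (n-j-1)).map s := by
    apply List.map_congr_left
    intro i hi
    rw [List.mem_range'_1] at hi
    have hij : i ≠ j := by omega
    exact Function.update_of_ne hij k s
  rw [hsplit, List.map_append, List.prod_append, h1, hnj, List.range'_succ,
    List.map_cons, List.prod_cons, Function.update_self, h2, mul_assoc, Nat.add_sub_cancel]

/-- If multiplication of a complete lattice semiring is continuous in each argument over
nonempty sets, then infinite products (suprema of finite prefix products, taken in order)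
are continuous in each argument. -/
theorem infinite_prod_continuous {S : Type*} [Semiring S] [CompleteLattice S]
    (hmul_left : ∀ K : Set S, K.Nonempty → ∀ a : S, a * sSup K = ⨆ k ∈ K, (a * k))
    (hmul_right : ∀ K : Set S, K.Nonempty → ∀ a : S, sSup K * a = ⨆ k ∈ K, (k * a))
    (s : ℕ → S) (j : ℕ) (K : Set S) (hK : K.Nonempty) :
    (⨆ k ∈ K, ⨆ n : ℕ, ((List.range n).map (Function.update s j k)).prod)
      = ⨆ n : ℕ, ((List.range n).map (Function.update s j (sSup K))).prod := by
  have swap : (⨆ k ∈ K, ⨆ n : ℕ, ((List.range n).map (Function.update s j k)).prod)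
      = ⨆ n : ℕ, ⨆ k ∈ K, ((List.range n).map (Function.update s j k)).prod := by
    rw [iSup_comm]
    exact iSup_congr fun k => iSup_comm
  rw [swap]
  apply iSup_congr
  intro n
  rcases le_or_gt n j with hn | hn
  · have hconst : ∀ k : S, ((List.range n).map (Function.update s j k)).prod
        = ((List.range n).map s).prod := by
      intro k
      congr 1
      apply List.map_congr_left
      intro i hi
      rw [List.mem_range] at hi
      have hij : i ≠ j := by omega
      exact Function.update_of_ne hij k s
    simp_rw [hconst]
    exact biSup_const hK
  · simp_rw [prefix_prod_update s j n _ hn]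
    set A := ((List.range j).map s).prod with hA
    set B := ((List.range' (j+1) (n-j-1)).map s).prod with hB
    have h1 : sSup K * B = sSup ((· * B) '' K) := by
      rw [hmul_right K hK B, sSup_image]
    calc ⨆ k ∈ K, A * k * B
        = ⨆ k ∈ K, A * (k * B) := by simp_rw [mul_assoc]
      _ = ⨆ x ∈ (· * B) '' K, A * x := by rw [iSup_image]
      _ = A * sSup ((· * B) '' K) := (hmul_left _ (hK.image _) A).symm
      _ = A * (sSup K * B) := by rw [h1]
      _ = A * sSup K * B := (mul_assoc _ _ _).symm
end
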